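/- Let S, A', B' be subspaces of ℝ^N, set W = S ⊓ (A')ᗮ and V = S ⊓ Wᗮ, and assume W ≤ (B')ᗮ. Assume moreover that either (a) dim V > 0, there exists c₀ > 0 with ⟨x, (P_{A'} − P_{B'})x⟩ ≥ c₀‖x‖² for all x ∈ V, and 0 < α < c₀/(c₀+1); or (b) dim V = 0 and 0 < α < 1. Then the matrix K := (I − P_S) + α(P_{A'} − P_{B'}) is positive semidefinite, its kernel equals W, and rank(K) = N − dim S + dim V. -/

import Mathlib

noncomputable def projCLM {E : Type*} [NormedAddCommGroup E] [InnerProductSpace ℝ E]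
    [FiniteDimensional ℝ E] (S : Submodule ℝ E) : E →L[ℝ] E :=
  S.subtypeL.comp S.orthogonalProjectionOnto

/-!
Since `I - P_S = P_{Sᗮ}` and `P_{A'} - P_{B'}` are symmetric, so is `K`, and `K` kills
`W ≤ S ⊓ A'ᗮ ⊓ B'ᗮ`; hence `⟪x, K x⟫` only depends on the component of `x` in `Wᗮ`, and both
positive semidefiniteness and `ker K = W` follow once `⟪y, K y⟫ > 0` for `0 ≠ y ∈ Wᗮ`. Split such
a `y` as `v + u` with `v = P_S y ∈ V` and `u ∈ Sᗮ`. As `‖P_{A'} - P_{B'}‖ ≤ 1`,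
`⟪y, K y⟫ ≥ ‖u‖² + α (c₀ ‖v‖² - 2 ‖v‖ ‖u‖ - ‖u‖²)`, a binary quadratic form in `(‖v‖, ‖u‖)` that
is positive definite exactly when `α (c₀ + 1) < c₀`. When `V = 0` any `c₀` works, so `α < 1`
suffices. The rank is then `N - dim W = N - dim S + dim V`.
-/
open Submodule
open scoped RealInnerProductSpace

section
variable {E : Type*} [NormedAddCommGroup E] [InnerProductSpace ℝ E]

theorem projCLM_eq_starProjection [FiniteDimensional ℝ E] (S : Submodule ℝ E) :
    projCLM S = S.starProjection :=
  rfl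

theorem binary_quadratic_pos {α c₀ s t : ℝ} (hc₀ : 0 < c₀) (hα : 0 < α) (hαc : α * (c₀ + 1) < c₀)
    (hst : s ≠ 0 ∨ t ≠ 0) : 0 < (1 - α) * t ^ 2 - 2 * α * s * t + α * c₀ * s ^ 2 := by
  have hα1 : 0 < 1 - α := by nlinarith
  -- `(1 - α) Q(s, t) = ((1 - α) t - α s)² + α (c₀ - α (c₀ + 1)) s²`
  suffices 0 < (1 - α) * ((1 - α) * t ^ 2 - 2 * α * s * t + α * c₀ * s ^ 2) from
    pos_of_mul_pos_right this hα1.le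
  have hgap : 0 < α * (c₀ - α * (c₀ + 1)) := mul_pos hα (by linarith)
  rcases eq_or_ne s 0 with rfl | hs
  · have ht : t ≠ 0 := hst.resolve_left (not_not.mpr rfl)
    nlinarith [mul_pos (mul_pos hα1 hα1) (sq_pos_of_ne_zero ht)]
  · nlinarith [sq_nonneg ((1 - α) * t - α * s), mul_pos hgap (sq_pos_of_ne_zero hs)]

theorem exists_pos_mul_add_one_lt_self {α : ℝ} (hα1 : α < 1) :
    ∃ c₀ : ℝ, 0 < c₀ ∧ α * (c₀ + 1) < c₀ := by
  have h1α : 0 < 1 - α := sub_pos.mpr hα1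
  refine ⟨1 / (1 - α), by positivity, ?_⟩
  field_simp
  nlinarith

theorem norm_starProjection_sub_starProjection_le (A B : Submodule ℝ E)
    [A.HasOrthogonalProjection] [B.HasOrthogonalProjection] :
    ‖A.starProjection - B.starProjection‖ ≤ 1 := by
  refine ContinuousLinearMap.opNorm_le_bound _ zero_le_one fun x => ?_
  set a := A.starProjection (Bᗮ.starProjection x)
  set b := Aᗮ.starProjection (B.starProjection x)
  have hab : (A.starProjection - B.starProjection) x = a - b := by
    simp only [a, b, starProjection_orthogonal, sub_apply,
      ContinuousLinearMap.id_apply, map_sub]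
    abel
  have hperp : ⟪a, b⟫ = 0 :=
    inner_right_of_mem_orthogonal (starProjection_apply_mem _ _) (starProjection_apply_mem _ _)
  have hx := B.norm_sq_eq_add_norm_sq_starProjection x
  have ha := A.norm_starProjection_apply_le (Bᗮ.starProjection x)
  have hb := Aᗮ.norm_starProjection_apply_le (B.starProjection x)
  rw [one_mul, hab, ← abs_norm, ← abs_norm x, ← sq_le_sq,
    norm_sub_sq_real, hperp, mul_zero, sub_zero, hx, add_comm (‖B.starProjection x‖ ^ 2)]
  gcongr

theorem inner_add_map_add_ge {T : E →L[ℝ] E} (hT : ‖T‖ ≤ 1) (v u : E) :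
    ⟪v, T v⟫ - 2 * (‖v‖ * ‖u‖) - ‖u‖ ^ 2 ≤ ⟪v + u, T (v + u)⟫ := by
  have hbound (a b : E) : -(‖a‖ * ‖b‖) ≤ ⟪a, T b⟫ :=
    calc -(‖a‖ * ‖b‖) ≤ -(‖a‖ * ‖T b‖) := by
          gcongr; simpa using T.le_of_opNorm_le hT b
      _ ≤ ⟪a, T b⟫ := neg_le_of_abs_le (abs_real_inner_le_norm a (T b))
  simp only [map_add, inner_add_left, inner_add_right]
  nlinarith [hbound v u, hbound u v, hbound u u]

theorem inner_starProjection_orthogonal_add_smul_apply_pos {S W : Submodule ℝ E}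
    [S.HasOrthogonalProjection] (hWS : W ≤ S) {T : E →L[ℝ] E} (hT : ‖T‖ ≤ 1) {α c₀ : ℝ}
    (hc₀ : 0 < c₀) (hα : 0 < α) (hαc : α * (c₀ + 1) < c₀)
    (hcoercive : ∀ v ∈ S ⊓ Wᗮ, c₀ * ‖v‖ ^ 2 ≤ ⟪v, T v⟫) {y : E} (hy : y ∈ Wᗮ) (hy0 : y ≠ 0) :
    0 < ⟪y, (Sᗮ.starProjection + α • T) y⟫ := by
  set v := S.starProjection y
  set u := Sᗮ.starProjection y
  have hvu : v + u = y := S.starProjection_add_starProjection_orthogonal y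
  have hu : u ∈ Sᗮ := starProjection_apply_mem _ _
  have hv : v ∈ S ⊓ Wᗮ := ⟨starProjection_apply_mem _ _, by
    rw [← add_sub_cancel_right v u, hvu]; exact sub_mem hy (orthogonal_le hWS hu)⟩
  have hyu : ⟪y, u⟫ = ‖u‖ ^ 2 := by
    rw [← hvu, inner_add_left, inner_right_of_mem_orthogonal hv.1 hu, zero_add,
      real_inner_self_eq_norm_sq]
  have hvu0 : ‖v‖ ≠ 0 ∨ ‖u‖ ≠ 0 := by
    by_contra! h
    exact hy0 (by rw [← hvu, norm_eq_zero.mp h.1, norm_eq_zero.mp h.2, add_zero])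
  have hTy := inner_add_map_add_ge hT v u
  rw [hvu] at hTy
  calc 0 < (1 - α) * ‖u‖ ^ 2 - 2 * α * ‖v‖ * ‖u‖ + α * c₀ * ‖v‖ ^ 2 :=
        binary_quadratic_pos hc₀ hα hαc hvu0
    _ ≤ ‖u‖ ^ 2 + α * (⟪v, T v⟫ - 2 * (‖v‖ * ‖u‖) - ‖u‖ ^ 2) := by
        nlinarith [hcoercive v hv]
    _ ≤ ‖u‖ ^ 2 + α * ⟪y, T y⟫ := by gcongr
    _ = ⟪y, (Sᗮ.starProjection + α • T) y⟫ := by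
        rw [add_apply, smul_apply, inner_add_right,
          real_inner_smul_right, hyu]

theorem starProjection_orthogonal_add_smul_sub_apply_eq_zero {S A B : Submodule ℝ E}
    [S.HasOrthogonalProjection] [A.HasOrthogonalProjection] [B.HasOrthogonalProjection] (α : ℝ)
    {w : E} (hS : w ∈ S) (hA : w ∈ Aᗮ) (hB : w ∈ Bᗮ) :
    (Sᗮ.starProjection + α • (A.starProjection - B.starProjection)) w = 0 := by
  have hS' : Sᗮ.starProjection w = 0 :=
    (starProjection_apply_eq_zero_iff _).mpr (S.le_orthogonal_orthogonal hS)
  simp [hS', (starProjection_apply_eq_zero_iff _).mpr hA, (starProjection_apply_eq_zero_iff _).mpr hB]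

theorem isSymmetric_starProjection_orthogonal_add_smul_sub (S A B : Submodule ℝ E)
    [S.HasOrthogonalProjection] [A.HasOrthogonalProjection] [B.HasOrthogonalProjection] (α : ℝ) :
    (Sᗮ.starProjection + α • (A.starProjection - B.starProjection)).toLinearMap.IsSymmetric :=
  Sᗮ.starProjection_isSymmetric.add
    ((A.starProjection_isSymmetric.sub B.starProjection_isSymmetric).smul (conj_trivial α))

end

theorem finrank_range_eq_of_ker_eq {𝕜 E : Type*} [RCLike 𝕜] [NormedAddCommGroup E]
    [InnerProductSpace 𝕜 E] [FiniteDimensional 𝕜 E] {K : E →ₗ[𝕜] E} {S W : Submodule 𝕜 E}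
    (hker : LinearMap.ker K = W) (hWS : W ≤ S) :
    Module.finrank 𝕜 (LinearMap.range K) =
      Module.finrank 𝕜 E - Module.finrank 𝕜 S + Module.finrank 𝕜 ↥(S ⊓ Wᗮ) := by
  have hrank := LinearMap.finrank_range_add_finrank_ker K
  have hdims := Submodule.finrank_add_inf_finrank_orthogonal hWS
  have hSE := S.finrank_le
  rw [hker] at hrank
  rw [inf_comm] at hdims
  omega

namespace LinearMap.IsSymmetric

variable {E : Type*} [NormedAddCommGroup E] [InnerProductSpace ℝ E] {T : E →ₗ[ℝ] E}
  {W : Submodule ℝ E} [W.HasOrthogonalProjection]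

theorem inner_map_self_eq_of_map_eq_zero (hT : T.IsSymmetric) (hTW : ∀ w ∈ W, T w = 0)
    (x : E) : ⟪x, T x⟫ = ⟪Wᗮ.starProjection x, T (Wᗮ.starProjection x)⟫ := by
  set y := Wᗮ.starProjection x
  have hw : W.starProjection x ∈ W := starProjection_apply_mem _ _
  have hx : W.starProjection x + y = x := W.starProjection_add_starProjection_orthogonal x
  rw [← hx, map_add, hTW _ hw, zero_add, inner_add_left, ← hT, hTW _ hw, inner_zero_left, zero_add]

theorem inner_map_self_nonneg_of_pos_on_orthogonal (hT : T.IsSymmetric)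
    (hTW : ∀ w ∈ W, T w = 0) (hpos : ∀ y ∈ Wᗮ, y ≠ 0 → 0 < ⟪y, T y⟫) (x : E) :
    0 ≤ ⟪x, T x⟫ := by
  rw [hT.inner_map_self_eq_of_map_eq_zero hTW]
  rcases eq_or_ne (Wᗮ.starProjection x) 0 with h | h
  · simp [h]
  · exact (hpos _ (starProjection_apply_mem _ _) h).le

theorem ker_eq_of_pos_on_orthogonal (hT : T.IsSymmetric) (hTW : ∀ w ∈ W, T w = 0)
    (hpos : ∀ y ∈ Wᗮ, y ≠ 0 → 0 < ⟪y, T y⟫) : ker T = W := by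
  refine le_antisymm (fun x hx => ?_) hTW
  by_contra hxW
  have hy : Wᗮ.starProjection x ≠ 0 := by
    rwa [Ne, starProjection_apply_eq_zero_iff, orthogonal_orthogonal]
  have := hpos _ (starProjection_apply_mem _ _) hy
  rw [← hT.inner_map_self_eq_of_map_eq_zero hTW, mem_ker.mp hx, inner_zero_right] at this
  exact this.false

end LinearMap.IsSymmetric

/-- Lemma 7 in the Appendix of the paper: positive semidefiniteness, kernel and rank of
`K = (I − P_S) + α(P_{A'} − P_{B'})`. -/
theorem K_psd_kernel_rank
    (N : ℕ) (S A' B' W V : Submodule ℝ (EuclideanSpace ℝ (Fin N)))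
    (hW : W = S ⊓ A'ᗮ) (hV : V = S ⊓ Wᗮ)
    (hWB : W ≤ B'ᗮ)
    (α : ℝ)
    (hcase :
      (0 < Module.finrank ℝ V ∧
        (∃ c₀ : ℝ, 0 < c₀ ∧
          (∀ x ∈ V, c₀ * ‖x‖ ^ 2 ≤ (inner ℝ x ((projCLM A' - projCLM B') x) : ℝ)) ∧
          0 < α ∧ α < c₀ / (c₀ + 1))) ∨
      (Module.finrank ℝ V = 0 ∧ 0 < α ∧ α < 1)) :
    (∀ x : EuclideanSpace ℝ (Fin N),
        0 ≤ (inner ℝ x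
          ((((ContinuousLinearMap.id ℝ (EuclideanSpace ℝ (Fin N))) - projCLM S)
            + α • (projCLM A' - projCLM B')) x) : ℝ)) ∧
    LinearMap.ker ((((ContinuousLinearMap.id ℝ (EuclideanSpace ℝ (Fin N))) - projCLM S)
        + α • (projCLM A' - projCLM B')) : EuclideanSpace ℝ (Fin N) →ₗ[ℝ] EuclideanSpace ℝ (Fin N)) = W ∧
    Module.finrank ℝ
        (LinearMap.range ((((ContinuousLinearMap.id ℝ (EuclideanSpace ℝ (Fin N))) - projCLM S)
          + α • (projCLM A' - projCLM B')) : EuclideanSpace ℝ (Fin N) →ₗ[ℝ] EuclideanSpace ℝ (Fin N)))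
      = N - Module.finrank ℝ S + Module.finrank ℝ V := by
  have hK_eq : ContinuousLinearMap.id ℝ _ - projCLM S + α • (projCLM A' - projCLM B') =
      Sᗮ.starProjection + α • (A'.starProjection - B'.starProjection) := by
    simp only [projCLM_eq_starProjection, starProjection_orthogonal]
  rw [← ContinuousLinearMap.toLinearMap_sub, ← ContinuousLinearMap.toLinearMap_sub,
    ← ContinuousLinearMap.toLinearMap_smul, ← ContinuousLinearMap.toLinearMap_add, hK_eq]
  have hWS : W ≤ S := hW ▸ inf_le_left
  obtain ⟨hα, c₀, hc₀, hcoercive, hαc⟩ : 0 < α ∧ ∃ c₀ : ℝ, 0 < c₀ ∧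
      (∀ x ∈ V, c₀ * ‖x‖ ^ 2 ≤ ⟪x, (A'.starProjection - B'.starProjection) x⟫) ∧
      α * (c₀ + 1) < c₀ := by
    rcases hcase with ⟨-, c₀, hc₀, hcoercive, hα, hαc⟩ | ⟨hV0, hα, hα1⟩
    · exact ⟨hα, c₀, hc₀, hcoercive, (lt_div_iff₀ (by positivity)).mp hαc⟩
    · obtain ⟨c₀, hc₀, hαc⟩ := exists_pos_mul_add_one_lt_self hα1
      have hVbot : V = ⊥ := Submodule.finrank_eq_zero.mp hV0
      exact ⟨hα, c₀, hc₀, fun x hx => by simp [(mem_bot ℝ).mp (hVbot ▸ hx)], hαc⟩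
  have hK := isSymmetric_starProjection_orthogonal_add_smul_sub S A' B' α
  have hKW (w) (hw : w ∈ W) := starProjection_orthogonal_add_smul_sub_apply_eq_zero α (hWS hw)
    (hW ▸ hw).2 (hWB hw)
  have hpos (y) (hy : y ∈ Wᗮ) (hy0 : y ≠ 0) := inner_starProjection_orthogonal_add_smul_apply_pos
    hWS (norm_starProjection_sub_starProjection_le A' B') hc₀ hα hαc (hV ▸ hcoercive) hy hy0
  have hker := hK.ker_eq_of_pos_on_orthogonal hKW hpos
  refine ⟨hK.inner_map_self_nonneg_of_pos_on_orthogonal hKW hpos, hker, ?_⟩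
  rw [finrank_range_eq_of_ker_eq hker hWS, finrank_euclideanSpace_fin, hV]
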